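/- Let f = x²y² + xz³ + yz³ ∈ ℂ[x,y,z]. Then neither f nor f² lies in E_f: for k = 1 and k = 2 there exist no polynomials P, Q, R ∈ ℂ[x,y,z] with f^k = (2xy² + z³)(∂R/∂y − ∂Q/∂z) + (2x²y + z³)(∂P/∂z − ∂R/∂x) + (3xz² + 3yz²)(∂Q/∂x − ∂P/∂y). Consequently, in the Brieskorn module B(f) = ℂ[x,y,z]/E_f, the class of ω = dx∧dy∧dz is either a non-torsion element or a torsion element of torsion order at least 3. -/

import Mathlib

/-!
Both non-memberships are witnessed by a linear functional: a weighted sum of finitely many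
coefficients (of monomials of degree 4, resp. 8) that vanishes on `df ∧ dη` for every `η`,
because the coefficients of `P`, `Q`, `R` entering it cancel, but takes the value 9 at `f`
and 2079 at `f²`. The weights solve the transposed linear system of the coefficient equations.
-/

open MvPolynomial

noncomputable def xyz (a b c : ℕ) : Fin 3 →₀ ℕ :=
  Finsupp.single 0 a + Finsupp.single 1 b + Finsupp.single 2 c

section Exponents

variable (a b c : ℕ)

@[simp] lemma xyz_apply_zero : xyz a b c 0 = a := by simp [xyz]
@[simp] lemma xyz_apply_one : xyz a b c 1 = b := by simp [xyz]
@[simp] lemma xyz_apply_two : xyz a b c 2 = c := by simp [xyz]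

variable {a b c} {d e f : ℕ}

lemma finsupp_fin_three_ext {m n : Fin 3 →₀ ℕ} (h0 : m 0 = n 0) (h1 : m 1 = n 1)
    (h2 : m 2 = n 2) : m = n := by
  ext i; fin_cases i <;> assumption

lemma xyz_inj : xyz a b c = xyz d e f ↔ a = d ∧ b = e ∧ c = f := by
  refine ⟨fun h => ⟨?_, ?_, ?_⟩,
    fun ⟨h0, h1, h2⟩ => finsupp_fin_three_ext (by simpa) (by simpa) (by simpa)⟩
  · simpa using DFunLike.congr_fun h 0
  · simpa using DFunLike.congr_fun h 1
  · simpa using DFunLike.congr_fun h 2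

lemma xyz_le_xyz : xyz a b c ≤ xyz d e f ↔ a ≤ d ∧ b ≤ e ∧ c ≤ f := by
  refine ⟨fun h => ⟨by simpa using h 0, by simpa using h 1, by simpa using h 2⟩, ?_⟩
  rintro ⟨h0, h1, h2⟩ i
  fin_cases i <;> simpa

lemma xyz_sub_xyz : xyz a b c - xyz d e f = xyz (a - d) (b - e) (c - f) :=
  finsupp_fin_three_ext (by simp) (by simp) (by simp)

end Exponents

section Coefficients

variable {R : Type*} [CommSemiring R] (a b c d e f : ℕ) (r : R) (p : MvPolynomial (Fin 3) R)

lemma monomial_xyz : monomial (xyz a b c) r = C r * X 0 ^ a * X 1 ^ b * X 2 ^ c := by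
  simp only [xyz, C_apply, X_pow_eq_monomial, monomial_mul, mul_one, zero_add]

lemma coeff_xyz_pderiv_zero :
    coeff (xyz a b c) (pderiv 0 p) = coeff (xyz (a + 1) b c) p * (a + 1) := by
  rw [coeff_pderiv, xyz_apply_zero]
  congr 2
  exact finsupp_fin_three_ext (by simp) (by simp) (by simp)

lemma coeff_xyz_pderiv_one :
    coeff (xyz a b c) (pderiv 1 p) = coeff (xyz a (b + 1) c) p * (b + 1) := by
  rw [coeff_pderiv, xyz_apply_one]
  congr 2
  exact finsupp_fin_three_ext (by simp) (by simp) (by simp)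

lemma coeff_xyz_pderiv_two :
    coeff (xyz a b c) (pderiv 2 p) = coeff (xyz a b (c + 1)) p * (c + 1) := by
  rw [coeff_pderiv, xyz_apply_two]
  congr 2
  exact finsupp_fin_three_ext (by simp) (by simp) (by simp)

lemma coeff_xyz_monomial_xyz_mul_of_le (h : a ≤ d ∧ b ≤ e ∧ c ≤ f) :
    coeff (xyz d e f) (monomial (xyz a b c) r * p) = r * coeff (xyz (d - a) (e - b) (f - c)) p := by
  rw [coeff_monomial_mul', if_pos (xyz_le_xyz.mpr h), xyz_sub_xyz]

lemma coeff_xyz_monomial_xyz_mul_of_not_le (h : ¬ (a ≤ d ∧ b ≤ e ∧ c ≤ f)) :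
    coeff (xyz d e f) (monomial (xyz a b c) r * p) = 0 := by
  rw [coeff_monomial_mul', if_neg (mt xyz_le_xyz.mp h)]

lemma coeff_xyz_monomial_xyz_of_eq (h : a = d ∧ b = e ∧ c = f) :
    coeff (xyz d e f) (monomial (xyz a b c) r) = r := by
  rw [coeff_monomial, if_pos (xyz_inj.mpr h)]

lemma coeff_xyz_monomial_xyz_of_ne (h : ¬ (a = d ∧ b = e ∧ c = f)) :
    coeff (xyz d e f) (monomial (xyz a b c) r) = 0 := by
  rw [coeff_monomial, if_neg (mt xyz_inj.mp h)]

end Coefficients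

noncomputable def quartic : MvPolynomial (Fin 3) ℂ :=
  X 0 ^ 2 * X 1 ^ 2 + X 0 * X 2 ^ 3 + X 1 * X 2 ^ 3

/-- `df ∧ d(P dx + Q dy + R dz)`, as the coefficient of `dx ∧ dy ∧ dz`. -/
noncomputable def dfWedgeD {A : Type*} [CommRing A] (f P Q R : MvPolynomial (Fin 3) A) :
    MvPolynomial (Fin 3) A :=
  pderiv 0 f * (pderiv 1 R - pderiv 2 Q) + pderiv 1 f * (pderiv 2 P - pderiv 0 R) +
    pderiv 2 f * (pderiv 0 Q - pderiv 1 P)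

lemma pderiv_quartic :
    pderiv 0 quartic = 2 * (X 0 * X 1 ^ 2) + X 2 ^ 3 ∧
    pderiv 1 quartic = 2 * (X 0 ^ 2 * X 1) + X 2 ^ 3 ∧
    pderiv 2 quartic = 3 * (X 0 * X 2 ^ 2) + 3 * (X 1 * X 2 ^ 2) := by
  simp only [quartic, map_add, Derivation.leibniz, Derivation.leibniz_pow, pderiv_X,
    Pi.single_apply, Fin.reduceEq, ↓reduceIte, smul_eq_mul, nsmul_eq_mul]
  exact ⟨by ring, by ring, by ring⟩

lemma quartic_eq_monomials :
    quartic = monomial (xyz 2 2 0) 1 + monomial (xyz 1 0 3) 1 + monomial (xyz 0 1 3) 1 := by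
  simp only [quartic, monomial_xyz, map_one]
  ring

lemma quartic_sq_eq_monomials :
    quartic ^ 2 = monomial (xyz 0 2 6) 1 + monomial (xyz 1 1 6) 2 + monomial (xyz 2 0 6) 1 +
      monomial (xyz 2 3 3) 2 + monomial (xyz 3 2 3) 2 + monomial (xyz 4 4 0) 1 := by
  simp only [quartic, monomial_xyz, map_ofNat, map_one]
  ring

lemma pderiv_quartic_eq_monomials :
    pderiv 0 quartic = monomial (xyz 1 2 0) 2 + monomial (xyz 0 0 3) 1 ∧
    pderiv 1 quartic = monomial (xyz 2 1 0) 2 + monomial (xyz 0 0 3) 1 ∧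
    pderiv 2 quartic = monomial (xyz 1 0 2) 3 + monomial (xyz 0 1 2) 3 := by
  obtain ⟨h₀, h₁, h₂⟩ := pderiv_quartic
  simp only [h₀, h₁, h₂, monomial_xyz, map_ofNat, map_one]
  exact ⟨by ring, by ring, by ring⟩

lemma quartic_ne_dfWedgeD (P Q R : MvPolynomial (Fin 3) ℂ) :
    quartic ≠ dfWedgeD quartic P Q R := by
  intro h
  obtain ⟨h₀, h₁, h₂⟩ := pderiv_quartic_eq_monomials
  rw [dfWedgeD, h₀, h₁, h₂, quartic_eq_monomials] at h
  simp only [add_mul, mul_sub] at h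
  have e₁ := congrArg (coeff (xyz 0 1 3)) h
  have e₂ := congrArg (coeff (xyz 1 0 3)) h
  have e₃ := congrArg (coeff (xyz 1 3 0)) h
  have e₄ := congrArg (coeff (xyz 2 2 0)) h
  have e₅ := congrArg (coeff (xyz 3 1 0)) h
  simp (disch := decide) only [coeff_add, coeff_sub, coeff_xyz_monomial_xyz_mul_of_le,
    coeff_xyz_monomial_xyz_mul_of_not_le, coeff_xyz_monomial_xyz_of_eq,
    coeff_xyz_monomial_xyz_of_ne, coeff_xyz_pderiv_zero, coeff_xyz_pderiv_one,
    coeff_xyz_pderiv_two, Nat.reduceSub, Nat.reduceAdd] at e₁ e₂ e₃ e₄ e₅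
  exact absurd (by linear_combination 2 * e₁ + 2 * e₂ - e₃ + 5 * e₄ - e₅ : (9 : ℂ) = 0)
    (by norm_num)

lemma quartic_sq_ne_dfWedgeD (P Q R : MvPolynomial (Fin 3) ℂ) :
    quartic ^ 2 ≠ dfWedgeD quartic P Q R := by
  intro h
  obtain ⟨h₀, h₁, h₂⟩ := pderiv_quartic_eq_monomials
  rw [dfWedgeD, h₀, h₁, h₂, quartic_sq_eq_monomials] at h
  simp only [add_mul, mul_sub] at h
  have e₀ := congrArg (coeff (xyz 0 2 6)) h
  have e₁ := congrArg (coeff (xyz 0 5 3)) h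
  have e₂ := congrArg (coeff (xyz 1 1 6)) h
  have e₃ := congrArg (coeff (xyz 1 4 3)) h
  have e₄ := congrArg (coeff (xyz 1 7 0)) h
  have e₅ := congrArg (coeff (xyz 2 0 6)) h
  have e₆ := congrArg (coeff (xyz 2 3 3)) h
  have e₇ := congrArg (coeff (xyz 2 6 0)) h
  have e₈ := congrArg (coeff (xyz 3 2 3)) h
  have e₉ := congrArg (coeff (xyz 3 5 0)) h
  have e₁₀ := congrArg (coeff (xyz 4 1 3)) h
  have e₁₁ := congrArg (coeff (xyz 4 4 0)) h
  have e₁₂ := congrArg (coeff (xyz 5 0 3)) h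
  have e₁₃ := congrArg (coeff (xyz 5 3 0)) h
  have e₁₄ := congrArg (coeff (xyz 6 2 0)) h
  have e₁₅ := congrArg (coeff (xyz 7 1 0)) h
  simp (disch := decide) only [coeff_add, coeff_sub, coeff_xyz_monomial_xyz_mul_of_le,
    coeff_xyz_monomial_xyz_mul_of_not_le, coeff_xyz_monomial_xyz_of_eq,
    coeff_xyz_monomial_xyz_of_ne, coeff_xyz_pderiv_zero, coeff_xyz_pderiv_one,
    coeff_xyz_pderiv_two, Nat.reduceSub, Nat.reduceAdd]
    at e₀ e₁ e₂ e₃ e₄ e₅ e₆ e₇ e₈ e₉ e₁₀ e₁₁ e₁₂ e₁₃ e₁₄ e₁₅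
  exact absurd (by linear_combination 308 * e₀ + 182 * e₁ + 44 * e₂ - 154 * e₃ - 91 * e₄ +
      308 * e₅ + 110 * e₆ + 119 * e₇ + 110 * e₈ - 187 * e₉ - 154 * e₁₀ + 935 * e₁₁ +
      182 * e₁₂ - 187 * e₁₃ + 119 * e₁₄ - 91 * e₁₅ : (2079 : ℂ) = 0) (by norm_num)

theorem statement16 :
    (¬ ∃ P Q R : MvPolynomial (Fin 3) ℂ,
        (X 0 ^ 2 * X 1 ^ 2 + X 0 * X 2 ^ 3 + X 1 * X 2 ^ 3 : MvPolynomial (Fin 3) ℂ) =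
          (2 * (X 0 * X 1 ^ 2) + X 2 ^ 3) * (pderiv 1 R - pderiv 2 Q) +
          (2 * (X 0 ^ 2 * X 1) + X 2 ^ 3) * (pderiv 2 P - pderiv 0 R) +
          (3 * (X 0 * X 2 ^ 2) + 3 * (X 1 * X 2 ^ 2)) * (pderiv 0 Q - pderiv 1 P)) ∧
    (¬ ∃ P Q R : MvPolynomial (Fin 3) ℂ,
        (X 0 ^ 2 * X 1 ^ 2 + X 0 * X 2 ^ 3 + X 1 * X 2 ^ 3 : MvPolynomial (Fin 3) ℂ) ^ 2 =
          (2 * (X 0 * X 1 ^ 2) + X 2 ^ 3) * (pderiv 1 R - pderiv 2 Q) +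
          (2 * (X 0 ^ 2 * X 1) + X 2 ^ 3) * (pderiv 2 P - pderiv 0 R) +
          (3 * (X 0 * X 2 ^ 2) + 3 * (X 1 * X 2 ^ 2)) * (pderiv 0 Q - pderiv 1 P)) := by
  obtain ⟨h₀, h₁, h₂⟩ := pderiv_quartic
  rw [← h₀, ← h₁, ← h₂]
  exact ⟨fun ⟨P, Q, R, h⟩ => quartic_ne_dfWedgeD P Q R h,
    fun ⟨P, Q, R, h⟩ => quartic_sq_ne_dfWedgeD P Q R h⟩
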